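/- arXiv:2508.05089 — 2 statements merged into one kernel-verified Lean document; each statement's English description precedes it below -/
import Mathlib

section
/- Let L : ℝ^M → ℝ be continuously differentiable, let g₁, …, g_N : ℝ^M × ℝ^d → ℝ^M be continuously differentiable, let ρ₁, …, ρ_N : [0,1] → ℝ^d be continuously differentiable, and let θ : [0,1] → ℝ^M be continuously differentiable with Σ_{i=1}^N g_i(θ(t), ρ_i(t)) = 0 for all t ∈ [0,1]. Suppose the Hessian H(t) := Σ_{i=1}^N D_θ g_i(θ(t), ρ_i(t)) ∈ ℝ^{M×M} is invertible for all t ∈ [0,1]. Then L(θ(1)) − L(θ(0)) = −Σ_{i=1}^N ∫₀¹ ∇L(θ(t))ᵀ H(t)⁻¹ D_y g_i(θ(t), ρ_i(t)) ρ_i′(t) dt; in particular the change in test loss equals the sum of the Integrated Influences I(i) := −∫₀¹ G(t) H(t)⁻¹ J_i(t) ρ_i′(t) dt with G(t) := ∇L(θ(t))ᵀ and J_i(t) := D_y g_i(θ(t), ρ_i(t)). -/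
/-!
Differentiating the stationarity condition `∑ i, gᵢ(θ t, ρᵢ t) = 0` in `t` gives
`H(t) θ'(t) + ∑ i, Jᵢ(t) ρᵢ'(t) = 0`, so by invertibility of the Hessian
`θ'(t) = -H(t)⁻¹ ∑ i, Jᵢ(t) ρᵢ'(t)` (implicit differentiation). The chain rule then gives
`(L ∘ θ)'(t) = -∑ i, G(t) H(t)⁻¹ Jᵢ(t) ρᵢ'(t)`, and the fundamental theorem of calculus
integrates this over `[0, 1]`; the integrand is continuous because inversion is continuous
on invertible operators.
-/

open Set ContinuousLinearMap

section PartialDerivatives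

variable {𝕜 : Type*} [NontriviallyNormedField 𝕜]
  {E F G : Type*} [NormedAddCommGroup E] [NormedSpace 𝕜 E]
  [NormedAddCommGroup F] [NormedSpace 𝕜 F] [NormedAddCommGroup G] [NormedSpace 𝕜 G]

theorem DifferentiableAt.fderiv_comp_prodMk_left {g : E × F → G} {x : E} {y : F}
    (hg : DifferentiableAt 𝕜 g (x, y)) :
    fderiv 𝕜 (fun x' => g (x', y)) x = (fderiv 𝕜 g (x, y)).comp (inl 𝕜 E F) :=
  (hg.hasFDerivAt.comp x (hasFDerivAt_prodMk_left x y)).fderiv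

theorem DifferentiableAt.fderiv_comp_prodMk_right {g : E × F → G} {x : E} {y : F}
    (hg : DifferentiableAt 𝕜 g (x, y)) :
    fderiv 𝕜 (fun y' => g (x, y')) y = (fderiv 𝕜 g (x, y)).comp (inr 𝕜 E F) :=
  (hg.hasFDerivAt.comp y (hasFDerivAt_prodMk_right x y)).fderiv

variable {X : Type*} [TopologicalSpace X] {s : Set X} {p : X → E} {q : X → F}

theorem ContDiff.continuousOn_fderiv_comp_prodMk_left {g : E × F → G} (hg : ContDiff 𝕜 1 g)
    (hp : ContinuousOn p s) (hq : ContinuousOn q s) :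
    ContinuousOn (fun t => fderiv 𝕜 (fun x => g (x, q t)) (p t)) s :=
  (((hg.continuous_fderiv one_ne_zero).comp_continuousOn (hp.prodMk hq)).clm_comp
    continuousOn_const).congr fun t _ =>
      ((hg.differentiable one_ne_zero) (p t, q t)).fderiv_comp_prodMk_left

theorem ContDiff.continuousOn_fderiv_comp_prodMk_right {g : E × F → G} (hg : ContDiff 𝕜 1 g)
    (hp : ContinuousOn p s) (hq : ContinuousOn q s) :
    ContinuousOn (fun t => fderiv 𝕜 (fun y => g (p t, y)) (q t)) s :=
  (((hg.continuous_fderiv one_ne_zero).comp_continuousOn (hp.prodMk hq)).clm_comp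
    continuousOn_const).congr fun t _ =>
      ((hg.differentiable one_ne_zero) (p t, q t)).fderiv_comp_prodMk_right

theorem ContinuousOn.clm_inverse [CompleteSpace E] {H : X → E →L[𝕜] F}
    (hH : ContinuousOn H s) (hinv : ∀ t ∈ s, (H t).IsInvertible) :
    ContinuousOn (fun t => (H t).inverse) s := by
  intro t ht
  obtain ⟨e, he⟩ := hinv t ht
  have hcont : ContinuousAt (inverse : (E →L[𝕜] F) → F →L[𝕜] E) (H t) :=
    he ▸ (contDiffAt_map_inverse (n := 0) e).continuousAt
  exact hcont.comp_continuousWithinAt (hH t ht)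

end PartialDerivatives

theorem ContinuousLinearMap.IsInvertible.eq_neg_inverse_apply {R M M₂ : Type*} [Ring R]
    [TopologicalSpace M] [AddCommGroup M] [Module R M]
    [TopologicalSpace M₂] [AddCommGroup M₂] [Module R M₂]
    {f : M →L[R] M₂} (hf : f.IsInvertible) {x : M} {y : M₂} (h : f x + y = 0) :
    x = -f.inverse y := by
  rw [← map_neg, eq_comm, hf.inverse_apply_eq, eq_neg_of_add_eq_zero_right h, neg_neg]

section StationaryPath

variable {ι : Type*} [Fintype ι]
  {E F G : Type*} [NormedAddCommGroup E] [NormedSpace ℝ E]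
  [NormedAddCommGroup F] [NormedSpace ℝ F] [NormedAddCommGroup G] [NormedSpace ℝ G]
  {g : ι → E × F → G} {θ : ℝ → E} {ρ : ι → ℝ → F} {s : Set ℝ} {t : ℝ}

theorem hessian_apply_add_sum_eq_zero_of_stationary {θ' : E} {ρ' : ι → F}
    (hg : ∀ i, DifferentiableAt ℝ (g i) (θ t, ρ i t))
    (hθ : HasDerivWithinAt θ θ' s t) (hρ : ∀ i, HasDerivWithinAt (ρ i) (ρ' i) s t)
    (hs : UniqueDiffWithinAt ℝ s t) (ht : t ∈ s)
    (hstat : ∀ u ∈ s, ∑ i, g i (θ u, ρ i u) = 0) :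
    (∑ i, fderiv ℝ (fun x => g i (x, ρ i t)) (θ t)) θ'
      + ∑ i, fderiv ℝ (fun y => g i (θ t, y)) (ρ i t) (ρ' i) = 0 := by
  have hderiv : HasDerivWithinAt (fun u => ∑ i, g i (θ u, ρ i u))
      (∑ i, fderiv ℝ (g i) (θ t, ρ i t) (θ', ρ' i)) s t :=
    .fun_sum fun i _ => (hg i).hasFDerivAt.comp_hasDerivWithinAt t (hθ.prodMk (hρ i))
  have hconst : HasDerivWithinAt (fun u => ∑ i, g i (θ u, ρ i u)) 0 s t :=
    (hasDerivWithinAt_const t s 0).congr hstat (hstat t ht)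
  rw [sum_apply, ← Finset.sum_add_distrib, ← hs.eq_deriv s hderiv hconst]
  refine Finset.sum_congr rfl fun i _ => ?_
  rw [(hg i).fderiv_comp_prodMk_left, (hg i).fderiv_comp_prodMk_right]
  exact comp_inl_add_comp_inr _ (θ', ρ' i)

theorem hasDerivWithinAt_comp_of_stationary {L : E → ℝ} {θ' : E} {ρ' : ι → F}
    (hL : DifferentiableAt ℝ L (θ t)) (hg : ∀ i, DifferentiableAt ℝ (g i) (θ t, ρ i t))
    (hθ : HasDerivWithinAt θ θ' s t) (hρ : ∀ i, HasDerivWithinAt (ρ i) (ρ' i) s t)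
    (hs : UniqueDiffWithinAt ℝ s t) (ht : t ∈ s)
    (hstat : ∀ u ∈ s, ∑ i, g i (θ u, ρ i u) = 0)
    (hinv : (∑ i, fderiv ℝ (fun x => g i (x, ρ i t)) (θ t)).IsInvertible) :
    HasDerivWithinAt (fun u => L (θ u))
      (-∑ i, fderiv ℝ L (θ t) ((∑ j, fderiv ℝ (fun x => g j (x, ρ j t)) (θ t)).inverse
        (fderiv ℝ (fun y => g i (θ t, y)) (ρ i t) (ρ' i)))) s t := by
  have hθ' := hinv.eq_neg_inverse_apply
    (hessian_apply_add_sum_eq_zero_of_stationary hg hθ hρ hs ht hstat)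
  have hchain := hL.hasFDerivAt.comp_hasDerivWithinAt t hθ
  rwa [hθ', map_neg, map_sum, map_sum] at hchain

theorem continuousOn_fderiv_hessian_inverse_fderiv [CompleteSpace E] {L : E → ℝ}
    {ρ' : ι → ℝ → F} (hL : ContDiff ℝ 1 L) (hg : ∀ i, ContDiff ℝ 1 (g i))
    (hθ : ContinuousOn θ s) (hρ : ∀ i, ContinuousOn (ρ i) s)
    (hρ' : ∀ i, ContinuousOn (ρ' i) s)
    (hinv : ∀ t ∈ s, (∑ i, fderiv ℝ (fun x => g i (x, ρ i t)) (θ t)).IsInvertible)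
    (i : ι) :
    ContinuousOn (fun t => fderiv ℝ L (θ t)
      ((∑ j, fderiv ℝ (fun x => g j (x, ρ j t)) (θ t)).inverse
        (fderiv ℝ (fun y => g i (θ t, y)) (ρ i t) (ρ' i t)))) s := by
  have hH : ContinuousOn (fun t => ∑ j, fderiv ℝ (fun x => g j (x, ρ j t)) (θ t)) s :=
    continuousOn_finsetSum _ fun j _ => (hg j).continuousOn_fderiv_comp_prodMk_left hθ (hρ j)
  exact ((hL.continuous_fderiv one_ne_zero).comp_continuousOn hθ).clm_apply
    ((hH.clm_inverse hinv).clm_apply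
      (((hg i).continuousOn_fderiv_comp_prodMk_right hθ (hρ i)).clm_apply (hρ' i)))

end StationaryPath

/-- The main Integrated Influence decomposition: along a stationary
path `θ(t)` for the interpolated datasets, the change of test loss decomposes as the
sum over samples of the Integrated Influences
`I(i) = −∫₀¹ G(t) H(t)⁻¹ Jᵢ(t) ρᵢ′(t) dt`. -/
theorem stmt_4 (M d N : ℕ)
    (L : EuclideanSpace ℝ (Fin M) → ℝ) (hL : ContDiff ℝ 1 L)
    (g : Fin N → EuclideanSpace ℝ (Fin M) × EuclideanSpace ℝ (Fin d) →
      EuclideanSpace ℝ (Fin M))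
    (hg : ∀ i, ContDiff ℝ 1 (g i))
    (ρ : Fin N → ℝ → EuclideanSpace ℝ (Fin d))
    (hρ : ∀ i, ContDiffOn ℝ 1 (ρ i) (Set.Icc 0 1))
    (θ : ℝ → EuclideanSpace ℝ (Fin M))
    (hθ : ContDiffOn ℝ 1 θ (Set.Icc 0 1))
    (hstat : ∀ t ∈ Set.Icc (0:ℝ) 1, ∑ i, g i (θ t, ρ i t) = 0)
    (H : ℝ → EuclideanSpace ℝ (Fin M) →L[ℝ] EuclideanSpace ℝ (Fin M))
    (hH : ∀ t, H t = ∑ i, fderiv ℝ (fun θ' => g i (θ', ρ i t)) (θ t))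
    (hinv : ∀ t ∈ Set.Icc (0:ℝ) 1,
      ∃ e : EuclideanSpace ℝ (Fin M) ≃L[ℝ] EuclideanSpace ℝ (Fin M),
        (e : EuclideanSpace ℝ (Fin M) →L[ℝ] EuclideanSpace ℝ (Fin M)) = H t) :
    L (θ 1) - L (θ 0)
      = -∑ i, ∫ t in (0:ℝ)..1,
          fderiv ℝ L (θ t)
            ((H t).inverse
              (fderiv ℝ (fun y => g i (θ t, y)) (ρ i t)
                (derivWithin (ρ i) (Set.Icc 0 1) t))) := by
  obtain rfl : H = _ := funext hH
  have hs : UniqueDiffOn ℝ (Icc (0:ℝ) 1) := uniqueDiffOn_Icc one_pos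
  have hφ := continuousOn_fderiv_hessian_inverse_fderiv hL hg hθ.continuousOn
    (fun i => (hρ i).continuousOn) (fun i => (hρ i).continuousOn_derivWithin hs le_rfl) hinv
  have hderiv : ∀ t ∈ Ioo (0:ℝ) 1, HasDerivAt (fun u => L (θ u)) _ t := fun t ht =>
    have hts := Ioo_subset_Icc_self ht
    (hasDerivWithinAt_comp_of_stationary (hL.differentiable one_ne_zero _)
      (fun i => (hg i).differentiable one_ne_zero _)
      (hθ.differentiableOn one_ne_zero t hts).hasDerivWithinAt
      (fun i => ((hρ i).differentiableOn one_ne_zero t hts).hasDerivWithinAt)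
      (hs t hts) hts hstat (hinv t hts)).hasDerivAt (Icc_mem_nhds ht.1 ht.2)
  rw [← intervalIntegral.integral_finsetSum fun i _ =>
      (hφ i).intervalIntegrable_of_Icc zero_le_one, ← intervalIntegral.integral_neg]
  exact (intervalIntegral.integral_eq_sub_of_hasDeriv_right_of_le zero_le_one
    (hL.continuous.comp_continuousOn hθ.continuousOn) (fun t ht => (hderiv t ht).hasDerivWithinAt)
    ((continuousOn_finsetSum _ fun i _ => hφ i).neg.intervalIntegrable_of_Icc zero_le_one)).symm
end

section
/- Let f : ℝ^M → ℝ be continuously differentiable, let θ* ∈ ℝ^M, and define the per-sample MSE gradient g(y) := ∇_θ (f(θ) − y)² |_{θ=θ*} = 2 (f(θ*) − y) ∇f(θ*) for y ∈ ℝ. Then: (i) g is affine in y with constant Jacobian D_y g(y) = −2 ∇f(θ*); (ii) g(f(θ*)) = 0; and (iii) for any row vector G ∈ ℝ^{1×M} and invertible H ∈ ℝ^{M×M}, the one-step (K = 1) discrete Integrated Influence with baseline target ȳ = f(θ*) and linear path ρ(t) = t y + (1−t) f(θ*) equals 2 G H⁻¹ ∇f(θ*) (y − f(θ*)), which is the Influence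 Function value −G H⁻¹ g(y). -/
/-! The per-sample MSE gradient `g y = 2 (f θs - y) ∇f(θs)` is affine in `y` and vanishes at the
baseline `f θs`, so its linearization there reproduces it exactly:
`Dg(f θs) (y - f θs) = g y`. Hence the one-step Integrated Influence equals `-G H⁻¹ g y`. -/

section Gradient

variable {E : Type*} [NormedAddCommGroup E] [InnerProductSpace ℝ E] [CompleteSpace E]
  {f : E → ℝ} {f' x : E}

theorem HasGradientAt.sub_const_sq (hf : HasGradientAt f f' x) (c : ℝ) :
    HasGradientAt (fun x => (f x - c) ^ 2) ((2 * (f x - c)) • f') x := by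
  have hsub := (hasGradientAt_iff_hasFDerivAt.mp hf).sub_const c
  rw [hasGradientAt_iff_hasFDerivAt, map_smul]
  simp only [pow_two, mul_smul, two_smul]
  exact hsub.mul hsub

theorem gradient_sub_const_sq (hf : DifferentiableAt ℝ f x) (c : ℝ) :
    gradient (fun x => (f x - c) ^ 2) x = (2 * (f x - c)) • gradient f x :=
  (hf.hasGradientAt.sub_const_sq c).gradient

end Gradient

theorem hasDerivAt_mul_const_sub_smul {F : Type*} [NormedAddCommGroup F] [NormedSpace ℝ F]
    (k a : ℝ) (v : F) (y : ℝ) :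
    HasDerivAt (fun y => (k * (a - y)) • v) ((-k) • v) y := by
  simpa using (((hasDerivAt_id y).const_sub a).const_mul k).smul_const v

/-- (Corollary 1.) For the per-sample MSE gradient
`g(y) = ∇_θ (f(θ) − y)² |_{θ = θs} = 2 (f(θs) − y) ∇f(θs)`:
(i) `g` is affine in `y` with constant Jacobian `D_y g = −2 ∇f(θs)`;
(ii) `g(f(θs)) = 0`; and
(iii) the one-step discrete Integrated Influence with baseline target `f(θs)` equals
`2 G H⁻¹ ∇f(θs) (y − f(θs))`, which is the Influence Function value `−G H⁻¹ g(y)`. -/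
theorem stmt_8 (M : ℕ)
    (f : EuclideanSpace ℝ (Fin M) → ℝ) (hf : ContDiff ℝ 1 f)
    (θs : EuclideanSpace ℝ (Fin M))
    (g : ℝ → EuclideanSpace ℝ (Fin M))
    (hgdef : ∀ y, g y = gradient (fun θ => (f θ - y) ^ 2) θs) :
    (∀ y, g y = (2 * (f θs - y)) • gradient f θs)
    ∧ (∀ y, fderiv ℝ g y
        = (1 : ℝ →L[ℝ] ℝ).smulRight ((-2 : ℝ) • gradient f θs))
    ∧ g (f θs) = 0
    ∧ (∀ (G : EuclideanSpace ℝ (Fin M) →L[ℝ] ℝ)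
        (H : EuclideanSpace ℝ (Fin M) ≃L[ℝ] EuclideanSpace ℝ (Fin M)) (y : ℝ),
        -(G (H.symm (fderiv ℝ g (f θs) (y - f θs))))
            = 2 * (y - f θs) * G (H.symm (gradient f θs))
        ∧ -(G (H.symm (fderiv ℝ g (f θs) (y - f θs))))
            = -(G (H.symm (g y)))) := by
  have hg : g = fun y => (2 * (f θs - y)) • gradient f θs := by
    funext y
    rw [hgdef, gradient_sub_const_sq (hf.differentiable one_ne_zero θs)]
  have hDg : ∀ y, fderiv ℝ g y = (1 : ℝ →L[ℝ] ℝ).smulRight ((-2 : ℝ) • gradient f θs) := by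
    intro y
    rw [hg]
    exact (hasDerivAt_mul_const_sub_smul 2 (f θs) _ y).hasFDerivAt.fderiv
  have hlin : ∀ y, fderiv ℝ g (f θs) (y - f θs) = g y := by
    intro y
    rw [hDg, hg, ContinuousLinearMap.smulRight_apply, one_apply_eq_self, smul_smul]
    ring_nf
  refine ⟨fun y => by rw [hg], hDg, by simp [hg], fun G H y => ⟨?_, by rw [hlin]⟩⟩
  rw [hlin, hg, map_smul, map_smul, smul_eq_mul]
  ring
end
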